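/- arXiv:1507.02190 — 2 statements merged into one kernel-verified Lean document; each statement's English description precedes it below -/
import Mathlib

section
/- The number of Steiner triple systems on an n-element point set that admit at least one non-identity automorphism is at most n!·(8ne/5)^{5n²/48}. -/
/-- A Steiner triple system on the point set `Fin n`: a collection of
3-element blocks such that every 2-element subset of points lies in exactly
one block. -/
def IsSTS (n : ℕ) (B : Finset (Finset (Fin n))) : Prop :=
  (∀ b ∈ B, b.card = 3) ∧
  ∀ p : Finset (Fin n), p.card = 2 → ∃! b, b ∈ B ∧ p ⊆ b

/-- `g` is an automorphism of the Steiner triple system `B`: the image of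
every block is a block. -/
def IsSTSAuto (n : ℕ) (B : Finset (Finset (Fin n))) (g : Equiv.Perm (Fin n)) : Prop :=
  ∀ b ∈ B, b.image g ∈ B

/-!
An automorphism `g ≠ 1` moves more points than it fixes, and a block fixed setwise by `g`
either lies in its fixed-point set or meets its support in at least two points. Counting blocks
of each kind shows that `⟨g⟩` has at most `(5n² + 8n)/48` orbits on the blocks. A system with
such a `g` is recovered from `g` and one point per orbit: repeatedly take a canonical pair not
yet covered by the orbits found so far; the next point completes it to a block, whose orbit is
new. Hence there are at most `n! · n ^ ((5n² + 8n)/48)` such systems, and `n ≤ exp (5n/8)`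
turns this into the bound.
-/

open Finset
open Equiv.Perm (SameCycle)

theorem Nat.two_mul_choose_two_add_self (m : ℕ) : 2 * m.choose 2 + m = m * m := by
  induction m with
  | zero => rfl
  | succ m ih => rw [Nat.choose_succ_succ, Nat.choose_one_right]; nlinarith

namespace Equiv.Perm

variable {α : Type*} {σ : Perm α} {B : Finset α}

theorem two_mul_card_le_card_add_card_filter_fixed [DecidableEq α] {R : Finset α}
    (hσ : ∀ b ∈ B, σ b ∈ B) (hRB : R ⊆ B)
    (hR : (R : Set α).Pairwise fun r s => ¬ σ.SameCycle r s) :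
    2 * #R ≤ #B + #{b ∈ B | σ b = b} := by
  set F := {b ∈ B | σ b = b}
  set M := {r ∈ R | ¬ σ r = r}
  have hdisj : _root_.Disjoint (R ∪ F) (M.image σ) := by
    rw [disjoint_right]
    rintro _ hm hRF
    obtain ⟨r, hr, rfl⟩ := mem_image.1 hm
    rw [mem_filter] at hr
    rcases mem_union.1 hRF with h | h
    · exact hR hr.1 h (Ne.symm hr.2) (sameCycle_apply_right.2 (SameCycle.refl _ _))
    · exact hr.2 (σ.injective (mem_filter.1 h).2)
  have hsub : R ∪ F ∪ M.image σ ⊆ B := by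
    refine union_subset (union_subset hRB (filter_subset _ _)) fun _ hm => ?_
    obtain ⟨r, hr, rfl⟩ := mem_image.1 hm
    exact hσ r (hRB (mem_filter.1 hr).1)
  have hRF : R ∩ F = {r ∈ R | σ r = r} := by
    ext r
    simp only [F, mem_inter, mem_filter]
    exact ⟨fun h => ⟨h.1, h.2.2⟩, fun h => ⟨h.1, hRB h.1, h.2⟩⟩
  have h1 := card_le_card hsub
  rw [card_union_of_disjoint hdisj, card_image_of_injective _ σ.injective] at h1
  have h2 := card_union_add_card_inter R F
  have h3 : #{r ∈ R | σ r = r} + #M = #R := card_filter_add_card_filter_not _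
  have h4 : #(R ∩ F) ≤ #F := card_le_card inter_subset_right
  rw [hRF] at h2 h4
  omega

theorem SameCycle.mem_of_mem [Finite α] (hσ : ∀ b ∈ B, σ b ∈ B) {b c : α}
    (h : σ.SameCycle b c) (hb : b ∈ B) : c ∈ B := by
  obtain ⟨k, rfl⟩ := h.exists_nat_pow_eq
  rw [← iterate_eq_pow]
  exact Set.MapsTo.iterate hσ k hb

end Equiv.Perm

namespace IsSTS

variable {n : ℕ} {B : Finset (Finset (Fin n))}

theorem eq_of_subset (hB : IsSTS n B) {p b c : Finset (Fin n)} (hp : #p = 2) (hb : b ∈ B)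
    (hc : c ∈ B) (hpb : p ⊆ b) (hpc : p ⊆ c) : b = c :=
  (hB.2 p hp).unique ⟨hb, hpb⟩ ⟨hc, hpc⟩

theorem exists_insert_eq (hB : IsSTS n B) {p b : Finset (Fin n)} (hb : b ∈ B) (hp : #p = 2)
    (hpb : p ⊆ b) : ∃ z, insert z p = b := by
  obtain ⟨z, hz⟩ : (b \ p).Nonempty := by
    rw [← card_pos, card_sdiff_of_subset hpb, hB.1 b hb, hp]
    norm_num
  rw [mem_sdiff] at hz
  refine ⟨z, eq_of_subset_of_card_le (insert_subset hz.1 hpb) ?_⟩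
  rw [card_insert_of_notMem hz.2, hp, hB.1 b hb]

theorem three_mul_card_filter_subset_le (hB : IsSTS n B) (S : Finset (Fin n)) :
    3 * #{b ∈ B | b ⊆ S} ≤ (#S).choose 2 := by
  set C := {b ∈ B | b ⊆ S}
  have hdisj : (C : Set (Finset (Fin n))).PairwiseDisjoint (powersetCard 2) := by
    intro b hb c hc hne
    refine disjoint_left.2 fun p hpb hpc => hne ?_
    rw [mem_powersetCard] at hpb hpc
    exact hB.eq_of_subset hpb.2 (mem_filter.1 hb).1 (mem_filter.1 hc).1 hpb.1 hpc.1
  calc 3 * #C = ∑ b ∈ C, #(b.powersetCard 2) := by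
        rw [sum_congr rfl fun b hb => by rw [card_powersetCard, hB.1 b (mem_filter.1 hb).1],
          sum_const, smul_eq_mul, mul_comm]
        rfl
    _ = #(C.biUnion (powersetCard 2)) := (card_biUnion hdisj).symm
    _ ≤ #(S.powersetCard 2) := card_le_card <| biUnion_subset.2 fun b hb =>
        powersetCard_mono (mem_filter.1 hb).2
    _ = (#S).choose 2 := card_powersetCard 2 S

variable {g : Equiv.Perm (Fin n)}

theorem apply_eq_self_of_pair_fixed (hB : IsSTS n B) (hg : IsSTSAuto n B g)
    {b p : Finset (Fin n)} (hb : b ∈ B) (hp : #p = 2) (hpb : p ⊆ b)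
    (hfix : ∀ a ∈ p, g a = a) : ∀ a ∈ b, g a = a := by
  have himg : b.image g = b := hB.eq_of_subset hp (hg b hb) hb
    (fun a ha => by rw [← hfix a ha]; exact mem_image_of_mem g (hpb ha)) hpb
  have hthird : #(b \ p) ≤ 1 := by rw [card_sdiff_of_subset hpb, hB.1 b hb, hp]
  intro a ha
  by_cases hap : a ∈ p
  · exact hfix a hap
  have hga : g a ∉ p := fun h => hap (by rwa [g.injective (hfix _ h)] at h)
  exact card_le_one.1 hthird _ (mem_sdiff.2 ⟨himg ▸ mem_image_of_mem g ha, hga⟩) _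
    (mem_sdiff.2 ⟨ha, hap⟩)

theorem card_compl_support_lt_card_support (hB : IsSTS n B) (hg : IsSTSAuto n B g)
    (hg1 : g ≠ 1) : #g.supportᶜ < #g.support := by
  obtain ⟨x, hx⟩ := nonempty_iff_ne_empty.2 (g.support_eq_empty_iff.not.2 hg1)
  set Bx := {b ∈ B | x ∈ b}
  have hcover : g.supportᶜ ⊆ Bx.biUnion fun b => b.erase x \ g.support := by
    intro y hy
    have hyx : y ≠ x := fun h => mem_compl.1 hy (h ▸ hx)
    obtain ⟨b, ⟨hb, hxyb⟩, -⟩ := hB.2 {x, y} (card_pair hyx.symm)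
    exact mem_biUnion.2 ⟨b, mem_filter.2 ⟨hb, hxyb (by simp)⟩,
      mem_sdiff.2 ⟨mem_erase.2 ⟨hyx, hxyb (by simp)⟩, mem_compl.1 hy⟩⟩
  have hdisj : (Bx : Set (Finset (Fin n))).PairwiseDisjoint fun b => b.erase x ∩ g.support := by
    intro b hb c hc hne
    refine disjoint_left.2 fun y hyb hyc => hne ?_
    simp only [Bx, mem_coe, mem_filter] at hb hc
    simp only [mem_inter, mem_erase] at hyb hyc
    exact hB.eq_of_subset (card_pair (Ne.symm hyb.1.1)) hb.1 hc.1
      (insert_subset hb.2 (singleton_subset_iff.2 hyb.1.2))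
      (insert_subset hc.2 (singleton_subset_iff.2 hyc.1.2))
  have hblock : ∀ b ∈ Bx, #(b.erase x \ g.support) ≤ #(b.erase x ∩ g.support) := by
    intro b hb
    rw [mem_filter] at hb
    -- a block through the moved point `x` cannot contain two fixed points
    have hfixed : #(b.erase x \ g.support) ≤ 1 := by
      by_contra! h
      obtain ⟨p, hp, hp2⟩ := exists_subset_card_eq h
      have := hB.apply_eq_self_of_pair_fixed hg hb.1 hp2
        (hp.trans (sdiff_subset.trans (erase_subset _ _)))
        fun a ha => Equiv.Perm.notMem_support.1 (mem_sdiff.1 (hp ha)).2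
      exact Equiv.Perm.mem_support.1 hx (this x hb.2)
    have := card_inter_add_card_sdiff (b.erase x) g.support
    rw [card_erase_of_mem hb.2, hB.1 b hb.1] at this
    omega
  calc #g.supportᶜ ≤ #(Bx.biUnion fun b => b.erase x \ g.support) := card_le_card hcover
    _ ≤ ∑ b ∈ Bx, #(b.erase x \ g.support) := card_biUnion_le
    _ ≤ ∑ b ∈ Bx, #(b.erase x ∩ g.support) := sum_le_sum hblock
    _ = #(Bx.biUnion fun b => b.erase x ∩ g.support) := (card_biUnion hdisj).symm
    _ ≤ #(g.support.erase x) := card_le_card <| biUnion_subset.2 fun b _ y hy => by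
        simp only [mem_inter, mem_erase] at hy ⊢
        exact ⟨hy.1.1, hy.2⟩
    _ < #g.support := card_erase_lt_of_mem hx

theorem two_mul_card_filter_fixed_not_subset_le (hB : IsSTS n B) :
    2 * #{b ∈ B | b.image g = b ∧ ¬ b ⊆ g.supportᶜ} ≤ n := by
  set D := {b ∈ B | b.image g = b ∧ ¬ b ⊆ g.supportᶜ}
  have hpair : ∀ b ∈ D, ∀ a ∈ b ∩ g.support, {a, g a} ⊆ b ∩ g.support := by
    intro b hb a ha
    rw [mem_inter] at ha
    refine insert_subset (mem_inter.2 ha) (singleton_subset_iff.2 (mem_inter.2 ⟨?_, ?_⟩))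
    · rw [← (mem_filter.1 hb).2.1]
      exact mem_image_of_mem g ha.1
    · exact Equiv.Perm.apply_mem_support.2 ha.2
  have hdisj : (D : Set (Finset (Fin n))).PairwiseDisjoint (· ∩ g.support) := by
    intro b hb c hc hne
    refine disjoint_left.2 fun a hab hac => hne ?_
    exact hB.eq_of_subset (card_pair (Equiv.Perm.mem_support.1 (mem_inter.1 hab).2).symm)
      (mem_filter.1 hb).1 (mem_filter.1 hc).1 ((hpair b hb a hab).trans inter_subset_left)
      ((hpair c hc a hac).trans inter_subset_left)
  have htwo : ∀ b ∈ D, 2 ≤ #(b ∩ g.support) := by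
    intro b hb
    obtain ⟨a, hab, has⟩ := not_subset.1 (mem_filter.1 hb).2.2
    have ha : a ∈ b ∩ g.support := mem_inter.2 ⟨hab, notMem_compl.1 has⟩
    calc 2 = #{a, g a} := (card_pair (Equiv.Perm.mem_support.1 (mem_inter.1 ha).2).symm).symm
      _ ≤ #(b ∩ g.support) := card_le_card (hpair b hb a ha)
  calc 2 * #D = ∑ _b ∈ D, 2 := by rw [sum_const, smul_eq_mul, mul_comm]
    _ ≤ ∑ b ∈ D, #(b ∩ g.support) := sum_le_sum htwo
    _ = #(D.biUnion (· ∩ g.support)) := (card_biUnion hdisj).symm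
    _ ≤ n := (card_le_univ _).trans_eq (Fintype.card_fin n)

theorem card_le_of_pairwise_not_sameCycle (hB : IsSTS n B) (hg : IsSTSAuto n B g) (hg1 : g ≠ 1)
    {R : Finset (Finset (Fin n))} (hRB : R ⊆ B)
    (hR : (R : Set (Finset (Fin n))).Pairwise fun b c => ¬ SameCycle g.finsetCongr b c) :
    48 * #R ≤ 5 * n ^ 2 + 8 * n := by
  have hσ : ∀ b, g.finsetCongr b = b.image g := fun b => by simp [map_eq_image]
  have hR2 := Equiv.Perm.two_mul_card_le_card_add_card_filter_fixed
    (fun b hb => (hσ b).symm ▸ hg b hb) hRB hR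
  have hfixed : {b ∈ B | g.finsetCongr b = b} ⊆
      {b ∈ B | b ⊆ g.supportᶜ} ∪ {b ∈ B | b.image g = b ∧ ¬ b ⊆ g.supportᶜ} := by
    intro b hb
    simp only [mem_union, mem_filter, hσ] at hb ⊢
    tauto
  have hF := (card_le_card hfixed).trans (card_union_le _ _)
  have hall := hB.three_mul_card_filter_subset_le univ
  rw [filter_true_of_mem fun b _ => subset_univ b, card_univ, Fintype.card_fin] at hall
  have hin := hB.three_mul_card_filter_subset_le g.supportᶜ
  have hout := hB.two_mul_card_filter_fixed_not_subset_le (g := g)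
  have hsupp := hB.card_compl_support_lt_card_support hg hg1
  have hsum := card_compl_add_card g.support
  rw [Fintype.card_fin] at hsum
  have hn := Nat.two_mul_choose_two_add_self n
  have hf := Nat.two_mul_choose_two_add_self #g.supportᶜ
  have hf2 : 2 * #g.supportᶜ ≤ n := by omega
  -- `48 #R ≤ 24 (#B + #fixed) ≤ 4 n (n - 1) + 4 f² + 12 n` with `f = #g.supportᶜ ≤ n / 2`
  nlinarith [Nat.mul_le_mul hf2 hf2]

end IsSTS


section GreedyDecoding

variable {n : ℕ} (g : Equiv.Perm (Fin n))

def orbitClosure (C : Finset (Finset (Fin n))) : Finset (Finset (Fin n)) :=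
  {c | ∃ b ∈ C, SameCycle g.finsetCongr b c}

def uncoveredPairs (C : Finset (Finset (Fin n))) : Finset (Finset (Fin n)) :=
  {p ∈ univ.powersetCard 2 | ∀ c ∈ orbitClosure g C, ¬ p ⊆ c}

noncomputable def greedyDecode : List (Fin n) → Finset (Finset (Fin n))
  | [] => ∅
  | z :: l =>
    if h : (uncoveredPairs g (greedyDecode l)).Nonempty then
      insert (insert z h.choose) (greedyDecode l)
    else greedyDecode l

variable {g} {B C : Finset (Finset (Fin n))}

theorem orbitClosure_subset (hg : IsSTSAuto n B g) (hCB : C ⊆ B) : orbitClosure g C ⊆ B := by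
  intro c hc
  obtain ⟨b, hb, hbc⟩ := (mem_filter.1 hc).2
  exact hbc.mem_of_mem (fun b hb => by simpa [map_eq_image] using hg b hb) (hCB hb)

theorem orbitClosure_eq_of_uncoveredPairs_eq_empty (hB : IsSTS n B) (hg : IsSTSAuto n B g)
    (hCB : C ⊆ B) (hC : uncoveredPairs g C = ∅) : orbitClosure g C = B := by
  refine (orbitClosure_subset hg hCB).antisymm fun c hc => ?_
  obtain ⟨p, hpc, hp⟩ := exists_subset_card_eq (show 2 ≤ #c by rw [hB.1 c hc]; norm_num)
  have hcov : p ∉ uncoveredPairs g C := hC ▸ notMem_empty p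
  simp only [uncoveredPairs, mem_filter, mem_powersetCard, not_and, not_forall, not_not] at hcov
  obtain ⟨c', hc', hpc'⟩ := hcov ⟨subset_univ p, hp⟩
  rwa [hB.eq_of_subset hp hc (orbitClosure_subset hg hCB hc') hpc hpc']

theorem notMem_and_pairwise_insert_of_mem_uncoveredPairs
    (hC : (C : Set (Finset (Fin n))).Pairwise fun b c => ¬ SameCycle g.finsetCongr b c)
    {p b : Finset (Fin n)} (hp : p ∈ uncoveredPairs g C) (hpb : p ⊆ b) :
    b ∉ C ∧ ((insert b C : Finset (Finset (Fin n))) : Set (Finset (Fin n))).Pairwise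
      fun b c => ¬ SameCycle g.finsetCongr b c := by
  have hnew : ∀ c ∈ C, ¬ SameCycle g.finsetCongr c b :=
    fun c hc h => (mem_filter.1 hp).2 b (mem_filter.2 ⟨mem_univ b, c, hc, h⟩) hpb
  refine ⟨fun hb => hnew b hb (SameCycle.refl _ _), ?_⟩
  rw [coe_insert, Set.pairwise_insert]
  exact ⟨hC, fun c hc _ => ⟨fun h => hnew c hc h.symm, hnew c hc⟩⟩

theorem exists_greedyDecode_invariant [NeZero n] (hB : IsSTS n B) (i : ℕ) :
    ∃ l : List (Fin n), l.length = i ∧ greedyDecode g l ⊆ B ∧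
      (greedyDecode g l : Set (Finset (Fin n))).Pairwise
        (fun b c => ¬ SameCycle g.finsetCongr b c) ∧
      (uncoveredPairs g (greedyDecode g l) = ∅ ∨ #(greedyDecode g l) = i) := by
  induction i with
  | zero => exact ⟨[], rfl, empty_subset _, by simp [greedyDecode], by simp [greedyDecode]⟩
  | succ i ih =>
    obtain ⟨l, hl, hsub, hpw, hinv⟩ := ih
    by_cases h : (uncoveredPairs g (greedyDecode g l)).Nonempty
    · have hp := h.choose_spec
      have hp2 : #h.choose = 2 := (mem_powersetCard.1 (mem_filter.1 hp).1).2
      obtain ⟨b, ⟨hb, hpb⟩, -⟩ := hB.2 _ hp2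
      obtain ⟨hbD, hpw'⟩ := notMem_and_pairwise_insert_of_mem_uncoveredPairs hpw hp hpb
      obtain ⟨z, rfl⟩ := hB.exists_insert_eq hb hp2 hpb
      have hD : greedyDecode g (z :: l) = insert (insert z h.choose) (greedyDecode g l) := by
        simp only [greedyDecode, dif_pos h]
      refine ⟨z :: l, by simp [hl], hD ▸ insert_subset hb hsub, hD ▸ hpw', Or.inr ?_⟩
      rw [hD, card_insert_of_notMem hbD, hinv.resolve_left h.ne_empty]
    · have hD : greedyDecode g (0 :: l) = greedyDecode g l := by
        simp only [greedyDecode, dif_neg h]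
      exact ⟨0 :: l, by simp [hl], hD ▸ hsub, hD ▸ hpw,
        Or.inl (hD ▸ not_nonempty_iff_eq_empty.1 h)⟩

theorem exists_greedyDecode_eq [NeZero n] (hB : IsSTS n B) (hg : IsSTSAuto n B g) {K : ℕ}
    (hK : ∀ R ⊆ B, (R : Set (Finset (Fin n))).Pairwise
      (fun b c => ¬ SameCycle g.finsetCongr b c) → #R ≤ K) :
    ∃ l : List (Fin n), l.length = K ∧ orbitClosure g (greedyDecode g l) = B := by
  obtain ⟨l, hl, hsub, hpw, hinv⟩ := exists_greedyDecode_invariant (g := g) hB K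
  refine ⟨l, hl, orbitClosure_eq_of_uncoveredPairs_eq_empty hB hg hsub ?_⟩
  rcases hinv with hcov | hcard
  · exact hcov
  by_contra hne
  obtain ⟨p, hp⟩ := nonempty_iff_ne_empty.2 hne
  obtain ⟨b, ⟨hb, hpb⟩, -⟩ := hB.2 p (mem_powersetCard.1 (mem_filter.1 hp).1).2
  obtain ⟨hbD, hpw'⟩ := notMem_and_pairwise_insert_of_mem_uncoveredPairs hpw hp hpb
  have hle := hK _ (insert_subset hb hsub) hpw'
  rw [card_insert_of_notMem hbD, hcard] at hle
  omega

end GreedyDecoding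

open Nat in
theorem card_sts_with_nontrivial_auto_le (n K : ℕ)
    (hK : ∀ B g, IsSTS n B → IsSTSAuto n B g → g ≠ 1 → ∀ R ⊆ B,
      (R : Set (Finset (Fin n))).Pairwise (fun b c => ¬ SameCycle g.finsetCongr b c) →
      #R ≤ K) :
    Nat.card {B : Finset (Finset (Fin n)) // IsSTS n B ∧
        ∃ g : Equiv.Perm (Fin n), g ≠ 1 ∧ IsSTSAuto n B g} ≤ n ! * n ^ K := by
  classical
  let decode : Equiv.Perm (Fin n) × List.Vector (Fin n) K → Finset (Finset (Fin n)) :=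
    fun x => orbitClosure x.1 (greedyDecode x.1 x.2.toList)
  calc Nat.card {B : Finset (Finset (Fin n)) // IsSTS n B ∧
        ∃ g : Equiv.Perm (Fin n), g ≠ 1 ∧ IsSTSAuto n B g}
      = #{B | IsSTS n B ∧ ∃ g : Equiv.Perm (Fin n), g ≠ 1 ∧ IsSTSAuto n B g} := by
        rw [Nat.card_eq_fintype_card, Fintype.card_subtype]
    _ ≤ #(univ.image decode) := card_le_card fun B hBmem => by
        obtain ⟨hB, g, hg1, hg⟩ := (mem_filter.1 hBmem).2
        have : NeZero n := ⟨by rintro rfl; exact hg1 (Subsingleton.elim _ _)⟩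
        obtain ⟨l, hl, hdecode⟩ := exists_greedyDecode_eq hB hg (hK B g hB hg hg1)
        exact mem_image.2 ⟨(g, ⟨l, hl⟩), mem_univ _, hdecode⟩
    _ ≤ Fintype.card (Equiv.Perm (Fin n) × List.Vector (Fin n) K) := card_image_le
    _ = n ! * n ^ K := by simp [card_vector, Fintype.card_perm]

open Real in
theorem natCast_pow_le_rpow {n K : ℕ} (hK : 48 * K ≤ 5 * n ^ 2 + 8 * n) :
    (n : ℝ) ^ K ≤ (8 * n * exp 1 / 5) ^ (5 * (n : ℝ) ^ 2 / 48) := by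
  rcases n.eq_zero_or_pos with rfl | hn
  · obtain rfl : K = 0 := by omega
    simp
  have hn1 : (1 : ℝ) ≤ n := by exact_mod_cast hn
  have hK' : (K : ℝ) ≤ 5 * (n : ℝ) ^ 2 / 48 + n / 6 := by
    have : (48 * K : ℝ) ≤ 5 * n ^ 2 + 8 * n := by exact_mod_cast hK
    linarith
  -- `e * y ≤ exp y` at `y = 5n/8`, and `e * 5/8 ≥ 1`
  have hexp : (n : ℝ) ≤ exp (5 * n / 8) := by
    have h := add_one_le_exp (5 * n / 8 - 1)
    rw [exp_sub, le_div_iff₀ (exp_pos 1)] at h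
    nlinarith [exp_one_gt_d9]
  have he : exp 1 ≤ 8 * exp 1 / 5 := by linarith [exp_pos 1]
  calc (n : ℝ) ^ K = (n : ℝ) ^ (K : ℝ) := (rpow_natCast _ _).symm
    _ ≤ (n : ℝ) ^ (5 * (n : ℝ) ^ 2 / 48 + n / 6) := rpow_le_rpow_of_exponent_le hn1 hK'
    _ = (n : ℝ) ^ (5 * (n : ℝ) ^ 2 / 48) * (n : ℝ) ^ ((n : ℝ) / 6) :=
        rpow_add (by linarith) _ _
    _ ≤ (n : ℝ) ^ (5 * (n : ℝ) ^ 2 / 48) * exp (5 * n / 8) ^ ((n : ℝ) / 6) := by gcongr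
    _ = (n : ℝ) ^ (5 * (n : ℝ) ^ 2 / 48) * exp 1 ^ (5 * (n : ℝ) ^ 2 / 48) := by
        rw [← exp_mul, ← exp_mul]
        ring_nf
    _ ≤ (n : ℝ) ^ (5 * (n : ℝ) ^ 2 / 48) * (8 * exp 1 / 5) ^ (5 * (n : ℝ) ^ 2 / 48) := by
        gcongr
    _ = (8 * n * exp 1 / 5) ^ (5 * (n : ℝ) ^ 2 / 48) := by
        rw [← mul_rpow (by linarith) (by positivity)]
        ring_nf

/-- The number of Steiner triple systems on an `n`-element point set admitting
at least one non-identity automorphism is at most `n! · (8ne/5) ^ (5n²/48)`. -/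
theorem count_sts_with_nontrivial_auto (n : ℕ) :
    (Nat.card {B : Finset (Finset (Fin n)) // IsSTS n B ∧
        ∃ g : Equiv.Perm (Fin n), g ≠ 1 ∧ IsSTSAuto n B g} : ℝ) ≤
      (n.factorial : ℝ) * (8 * (n : ℝ) * Real.exp 1 / 5) ^ (5 * (n : ℝ) ^ 2 / 48) := by
  set K := (5 * n ^ 2 + 8 * n) / 48
  have hcount := card_sts_with_nontrivial_auto_le n K fun B g hB hg hg1 R hRB hR =>
    (Nat.le_div_iff_mul_le (by norm_num)).2 <| by
      linarith [hB.card_le_of_pairwise_not_sameCycle hg hg1 hRB hR]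
  calc _ ≤ (n.factorial : ℝ) * (n : ℝ) ^ K := by exact_mod_cast hcount
    _ ≤ _ := by
      gcongr
      exact natCast_pow_le_rpow (by rw [mul_comm]; exact Nat.div_mul_le_self _ _)
end

section
/- Let X be an n-element set with n even, and let g be a non-identity permutation of X fixing at least one point. Then the number of edge-parallelisms of the complete graph on X admitting g as an automorphism is at most n^{3n²/8}. -/
/-!
Fix a point `x` with `g x = x`. A one-factorisation `P` is determined by the map sending `y` to
the class `M_y` of `P` through the edge `{x, y}`. If `g` is an automorphism of `P`, this map is
`g`-equivariant, hence determined by its values at one point of each `g`-orbit, and each value is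
a perfect matching, of which there are at most `n ^ (n / 2)`. With `r` orbits, `f` fixed points
and `m = n - f` moved points, `2 r ≤ n + f`, so it remains to see `f ≤ m`. For a fixed `y ≠ x`
the class `M_y` is `g`-invariant, so it matches a moved point `v` with a moved point; the
partners of `v` in the `f - 1` distinct classes `M_y` are distinct, whence `f - 1 ≤ m - 1`.
-/

/-- A perfect matching of the `n`-element set `Fin n`: a collection of
2-element subsets such that every point lies in exactly one of them. -/
def IsPerfectMatchingOn (n : ℕ) (M : Finset (Finset (Fin n))) : Prop :=
  (∀ e ∈ M, e.card = 2) ∧ ∀ x : Fin n, ∃! e, e ∈ M ∧ x ∈ e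

/-- An edge-parallelism (1-factorisation) of the complete graph on `Fin n`:
a collection of parallel classes, each a perfect matching, such that every
2-element subset of `Fin n` lies in exactly one class. -/
def IsOneFactorisation (n : ℕ) (P : Finset (Finset (Finset (Fin n)))) : Prop :=
  (∀ M ∈ P, IsPerfectMatchingOn n M) ∧
  ∀ e : Finset (Fin n), e.card = 2 → ∃! M, M ∈ P ∧ e ∈ M

/-- `g` is an automorphism of the edge-parallelism `P`: the image of every
parallel class is a parallel class. -/
def IsOneFactorisationAuto (n : ℕ) (P : Finset (Finset (Finset (Fin n))))
    (g : Equiv.Perm (Fin n)) : Prop :=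
  ∀ M ∈ P, M.image (Finset.image g) ∈ P

open Finset

namespace Equiv.Perm

variable {α : Type*}

theorem eq_of_semiconj_of_forall_out_eq [Finite α] {β : Type*} {σ : Perm α} {h : β → β}
    {φ ψ : α → β} (hφ : Function.Semiconj φ σ h) (hψ : Function.Semiconj ψ σ h)
    (hout : ∀ q : Quotient (SameCycle.setoid σ), φ q.out = ψ q.out) : φ = ψ := by
  funext y
  obtain ⟨k, hk⟩ := (Quotient.mk_out (s := SameCycle.setoid σ) y).exists_nat_pow_eq
  rw [← hk, coe_pow, hφ.iterate_right k, hψ.iterate_right k, hout]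

theorem two_mul_card_quotient_sameCycle_le [Fintype α] [DecidableEq α] (σ : Perm α) :
    2 * Nat.card (Quotient (SameCycle.setoid σ)) ≤ Fintype.card α + #{x | σ x = x} := by
  classical
  let π : α → Quotient (SameCycle.setoid σ) := Quotient.mk _
  have horbit : ∀ q, 2 ≤ #{x | π x = q} + #{x ∈ {x | σ x = x} | π x = q} := by
    intro q
    have hq : π q.out = q := Quotient.out_eq q
    by_cases hfix : σ q.out = q.out
    · have h1 : 0 < #{x | π x = q} := card_pos.mpr ⟨q.out, by simp [hq]⟩
      have h2 : 0 < #{x ∈ {x | σ x = x} | π x = q} := card_pos.mpr ⟨q.out, by simp [hq, hfix]⟩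
      omega
    · have hσ : π (σ q.out) = q :=
        (Quotient.sound (sameCycle_apply_left.mpr SameCycle.rfl)).trans hq
      have : 1 < #{x | π x = q} :=
        one_lt_card.mpr ⟨σ q.out, by simp [hσ], q.out, by simp [hq], hfix⟩
      omega
  calc 2 * Nat.card (Quotient (SameCycle.setoid σ))
      = ∑ _q, 2 := by simp [Nat.card_eq_fintype_card, mul_comm]
    _ ≤ ∑ q, (#{x | π x = q} + #{x ∈ {x | σ x = x} | π x = q}) := sum_le_sum fun q _ => horbit q
    _ = Fintype.card α + #{x | σ x = x} := by
      rw [sum_add_distrib, ← card_eq_sum_card_fiberwise (fun _ _ => mem_univ _),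
        ← card_eq_sum_card_fiberwise (fun _ _ => mem_univ _), card_univ]

end Equiv.Perm

namespace Finset

variable {α : Type*}

open Classical in
noncomputable def perfectMatchings (S : Finset α) : Finset (Finset (Finset α)) :=
  S.powerset.powerset.filter fun M => (∀ e ∈ M, #e = 2) ∧ ∀ x ∈ S, ∃! e, e ∈ M ∧ x ∈ e

theorem mem_perfectMatchings {S : Finset α} {M : Finset (Finset α)} :
    M ∈ S.perfectMatchings ↔
      (∀ e ∈ M, e ⊆ S) ∧ (∀ e ∈ M, #e = 2) ∧ ∀ x ∈ S, ∃! e, e ∈ M ∧ x ∈ e := by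
  simp only [perfectMatchings, mem_filter, mem_powerset, subset_iff (s₁ := M)]

theorem card_perfectMatchings_empty_le_one : #(∅ : Finset α).perfectMatchings ≤ 1 := by
  refine card_le_one.mpr fun M hM M' hM' => ?_
  have hempty : ∀ M ∈ (∅ : Finset α).perfectMatchings, M = ∅ := fun M hM =>
    eq_empty_of_forall_notMem fun e he => by
      obtain ⟨hsub, hcard, -⟩ := mem_perfectMatchings.mp hM
      simpa [subset_empty.mp (hsub e he)] using hcard e he
  rw [hempty M hM, hempty M' hM']

variable [DecidableEq α]

theorem exists_eq_pair_of_card_eq_two {e : Finset α} {a : α} (he : #e = 2) (ha : a ∈ e) :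
    ∃ b, b ≠ a ∧ e = {a, b} := by
  obtain ⟨b, hb⟩ := card_eq_one.mp (by rw [card_erase_of_mem ha, he] : #(e.erase a) = 1)
  refine ⟨b, fun hba => ?_, by rw [← insert_erase ha, hb]⟩
  simpa [hba] using (hb ▸ mem_singleton_self b : b ∈ e.erase a)

theorem erase_mem_perfectMatchings {S : Finset α} {M : Finset (Finset α)} {a b : α}
    (hM : M ∈ S.perfectMatchings) (hab : {a, b} ∈ M) :
    M.erase {a, b} ∈ (S \ {a, b}).perfectMatchings := by
  rw [mem_perfectMatchings] at hM ⊢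
  obtain ⟨hsub, hcard, hcover⟩ := hM
  have hdisj : ∀ e ∈ M, e ≠ {a, b} → ∀ x ∈ e, x ∉ ({a, b} : Finset α) := by
    intro e he hne x hx hxab
    exact hne ((hcover x (hsub _ hab hxab)).unique ⟨he, hx⟩ ⟨hab, hxab⟩)
  refine ⟨fun e he x hx => mem_sdiff.mpr ⟨hsub e (mem_of_mem_erase he) hx,
      hdisj e (mem_of_mem_erase he) (ne_of_mem_erase he) x hx⟩,
    fun e he => hcard e (mem_of_mem_erase he), fun x hx => ?_⟩
  obtain ⟨hxS, hxab⟩ := mem_sdiff.mp hx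
  obtain ⟨e, ⟨he, hxe⟩, huniq⟩ := hcover x hxS
  refine ⟨e, ⟨mem_erase.mpr ⟨fun h => hxab (h ▸ hxe), he⟩, hxe⟩, ?_⟩
  rintro e' ⟨he', hxe'⟩
  exact huniq e' ⟨mem_of_mem_erase he', hxe'⟩

theorem perfectMatchings_subset_biUnion {S : Finset α} {a : α} (ha : a ∈ S) :
    S.perfectMatchings ⊆
      (S.erase a).biUnion fun b => (S \ {a, b}).perfectMatchings.image (insert {a, b}) := by
  intro M hM
  obtain ⟨hsub, hcard, hcover⟩ := mem_perfectMatchings.mp hM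
  obtain ⟨e, ⟨he, hae⟩, -⟩ := hcover a ha
  obtain ⟨b, hba, rfl⟩ := exists_eq_pair_of_card_eq_two (hcard e he) hae
  exact mem_biUnion.mpr ⟨b, mem_erase.mpr ⟨hba, hsub _ he (by simp)⟩,
    mem_image.mpr ⟨_, erase_mem_perfectMatchings hM he, insert_erase he⟩⟩

theorem card_perfectMatchings_le (S : Finset α) : #S.perfectMatchings ≤ #S ^ (#S / 2) := by
  induction hk : #S using Nat.strong_induction_on generalizing S with
  | _ k ih =>
    obtain rfl | ⟨a, ha⟩ := S.eq_empty_or_nonempty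
    · subst hk
      simpa using card_perfectMatchings_empty_le_one
    have hk1 : 0 < k := hk ▸ card_pos.mpr ⟨a, ha⟩
    have hsmaller : ∀ b ∈ S.erase a, #(S \ {a, b}).perfectMatchings ≤ (k - 2) ^ ((k - 2) / 2) := by
      intro b hb
      have hab : {a, b} ⊆ S := insert_subset ha (singleton_subset_iff.mpr (mem_of_mem_erase hb))
      have hcard : #(S \ {a, b}) = k - 2 := by
        rw [card_sdiff_of_subset hab, card_pair (ne_of_mem_erase hb).symm, hk]
      simpa [hcard] using ih _ (by omega) _ hcard
    calc #S.perfectMatchings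
        ≤ ∑ b ∈ S.erase a, #((S \ {a, b}).perfectMatchings.image (insert {a, b})) :=
          (card_le_card (perfectMatchings_subset_biUnion ha)).trans card_biUnion_le
      _ ≤ ∑ _b ∈ S.erase a, (k - 2) ^ ((k - 2) / 2) :=
          sum_le_sum fun b hb => card_image_le.trans (hsmaller b hb)
      _ = (k - 1) * (k - 2) ^ ((k - 2) / 2) := by
          rw [sum_const, card_erase_of_mem ha, hk, smul_eq_mul]
      _ ≤ k ^ (k / 2) := by
          rcases Nat.lt_or_ge k 2 with hk2 | hk2
          · obtain rfl : k = 1 := by omega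
            simp
          · calc (k - 1) * (k - 2) ^ ((k - 2) / 2) ≤ k * k ^ ((k - 2) / 2) :=
                  Nat.mul_le_mul (by omega) (Nat.pow_le_pow_left (by omega) _)
              _ = k ^ (k / 2) := by rw [← pow_succ']; congr 1; omega

end Finset

namespace IsPerfectMatchingOn

variable {n : ℕ} {M : Finset (Finset (Fin n))}

theorem eq_of_mem_of_mem (hM : IsPerfectMatchingOn n M) {e e' : Finset (Fin n)} {x : Fin n}
    (he : e ∈ M) (he' : e' ∈ M) (hx : x ∈ e) (hx' : x ∈ e') : e = e' :=
  (hM.2 x).unique ⟨he, hx⟩ ⟨he', hx'⟩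

theorem mem_perfectMatchings (hM : IsPerfectMatchingOn n M) :
    M ∈ (univ : Finset (Fin n)).perfectMatchings :=
  Finset.mem_perfectMatchings.mpr ⟨fun e _ => subset_univ e, hM.1, fun x _ => hM.2 x⟩

theorem apply_eq_self_of_apply_eq_self (hM : IsPerfectMatchingOn n M) {g : Equiv.Perm (Fin n)}
    (hinv : M.image (image g) = M) {v w : Fin n} (he : {v, w} ∈ M) (hw : g w = w) : g v = v := by
  have hgv : {g v, w} ∈ M := by
    rw [← hinv]
    exact mem_image.mpr ⟨_, he, by simp [hw]⟩
  have hpair : ({g v, w} : Finset (Fin n)) = {v, w} :=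
    hM.eq_of_mem_of_mem (x := w) hgv he (by simp) (by simp)
  have hgv_mem : g v ∈ ({v, w} : Finset (Fin n)) := hpair ▸ mem_insert_self _ _
  rcases mem_insert.mp hgv_mem with h | h
  · exact h
  · have hvw : v = w := g.injective ((mem_singleton.mp h).trans hw.symm)
    rw [hvw, hw]

end IsPerfectMatchingOn

section OneFactorisation

variable {n : ℕ}

/-- The class of `P` containing the edge `{x, y}`, or `∅` if there is none (as for `x = y`). -/
def parallelClass (P : Finset (Finset (Finset (Fin n)))) (x y : Fin n) : Finset (Finset (Fin n)) :=
  {M ∈ P | {x, y} ∈ M}.sup id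

namespace IsOneFactorisation

variable {P : Finset (Finset (Finset (Fin n)))}

theorem eq_of_mem_of_mem (hP : IsOneFactorisation n P) {e : Finset (Fin n)} (he : #e = 2)
    {M M' : Finset (Finset (Fin n))} (hM : M ∈ P) (hM' : M' ∈ P) (heM : e ∈ M) (heM' : e ∈ M') :
    M = M' :=
  (hP.2 e he).unique ⟨hM, heM⟩ ⟨hM', heM'⟩

theorem parallelClass_eq (hP : IsOneFactorisation n P) {x y : Fin n} (hxy : x ≠ y)
    {M : Finset (Finset (Fin n))} (hM : M ∈ P) (he : {x, y} ∈ M) : parallelClass P x y = M := by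
  have hfilter : {M' ∈ P | {x, y} ∈ M'} = {M} := by
    ext M'
    simp only [mem_filter, mem_singleton]
    exact ⟨fun h => hP.eq_of_mem_of_mem (card_pair hxy) h.1 hM h.2 he, fun h => h ▸ ⟨hM, he⟩⟩
  simp [parallelClass, hfilter]

theorem parallelClass_mem (hP : IsOneFactorisation n P) {x y : Fin n} (hxy : x ≠ y) :
    parallelClass P x y ∈ P := by
  obtain ⟨M, ⟨hM, he⟩, -⟩ := hP.2 _ (card_pair hxy)
  rwa [hP.parallelClass_eq hxy hM he]

theorem pair_mem_parallelClass (hP : IsOneFactorisation n P) {x y : Fin n} (hxy : x ≠ y) :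
    {x, y} ∈ parallelClass P x y := by
  obtain ⟨M, ⟨hM, he⟩, -⟩ := hP.2 _ (card_pair hxy)
  rwa [hP.parallelClass_eq hxy hM he]

theorem parallelClass_self (hP : IsOneFactorisation n P) (x : Fin n) : parallelClass P x x = ∅ := by
  have hfilter : {M ∈ P | {x, x} ∈ M} = ∅ :=
    filter_false_of_mem fun M hM hx => by simpa using (hP.1 M hM).1 _ hx
  rw [parallelClass, hfilter, sup_empty, bot_eq_empty]

theorem parallelClass_apply_apply (hP : IsOneFactorisation n P) {g : Equiv.Perm (Fin n)}
    (hg : IsOneFactorisationAuto n P g) (x y : Fin n) :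
    parallelClass P (g x) (g y) = (parallelClass P x y).image (image g) := by
  by_cases hxy : x = y
  · rw [hxy, hP.parallelClass_self, hP.parallelClass_self, image_empty]
  · refine hP.parallelClass_eq (g.injective.ne hxy) (hg _ (hP.parallelClass_mem hxy)) ?_
    exact mem_image.mpr ⟨_, hP.pair_mem_parallelClass hxy, by simp [image_insert]⟩

theorem semiconj_parallelClass (hP : IsOneFactorisation n P) {g : Equiv.Perm (Fin n)}
    (hg : IsOneFactorisationAuto n P g) {x : Fin n} (hx : g x = x) :
    Function.Semiconj (parallelClass P x) g (image (image g)) := fun y => by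
  rw [← hP.parallelClass_apply_apply hg, hx]

theorem image_parallelClass (hP : IsOneFactorisation n P) (x : Fin n) :
    (univ.erase x).image (parallelClass P x) = P := by
  ext M
  simp only [mem_image, mem_erase, mem_univ, and_true]
  constructor
  · rintro ⟨y, hyx, rfl⟩
    exact hP.parallelClass_mem (Ne.symm hyx)
  · intro hM
    obtain ⟨e, ⟨he, hxe⟩, -⟩ := (hP.1 M hM).2 x
    obtain ⟨y, hyx, rfl⟩ := exists_eq_pair_of_card_eq_two ((hP.1 M hM).1 e he) hxe
    exact ⟨y, hyx, hP.parallelClass_eq (Ne.symm hyx) hM he⟩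

theorem eq_of_pair_mem_parallelClass (hP : IsOneFactorisation n P) {x y y' v w : Fin n}
    (hy : x ≠ y) (hy' : x ≠ y') (hvw : v ≠ w) (h : {v, w} ∈ parallelClass P x y)
    (h' : {v, w} ∈ parallelClass P x y') : y = y' := by
  have hclass : parallelClass P x y = parallelClass P x y' :=
    hP.eq_of_mem_of_mem (card_pair hvw) (hP.parallelClass_mem hy) (hP.parallelClass_mem hy') h h'
  have hpair : ({x, y} : Finset (Fin n)) = {x, y'} :=
    (hP.1 _ (hP.parallelClass_mem hy)).eq_of_mem_of_mem (x := x) (hP.pair_mem_parallelClass hy)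
      (hclass ▸ hP.pair_mem_parallelClass hy') (by simp) (by simp)
  have hmem : y ∈ ({x, y'} : Finset (Fin n)) := hpair ▸ by simp
  simpa [Ne.symm hy] using hmem

theorem exists_pair_mem_parallelClass_of_mem_support (hP : IsOneFactorisation n P)
    {g : Equiv.Perm (Fin n)} (hg : IsOneFactorisationAuto n P g) {x y v : Fin n} (hxy : x ≠ y)
    (hx : g x = x) (hy : g y = y) (hv : v ∈ g.support) :
    ∃ w ∈ g.support.erase v, {v, w} ∈ parallelClass P x y := by
  have hM := hP.1 _ (hP.parallelClass_mem hxy)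
  have hinv : (parallelClass P x y).image (image g) = parallelClass P x y := by
    rw [← hP.parallelClass_apply_apply hg, hx, hy]
  obtain ⟨e, ⟨he, hve⟩, -⟩ := hM.2 v
  obtain ⟨w, hwv, rfl⟩ := exists_eq_pair_of_card_eq_two (hM.1 e he) hve
  refine ⟨w, mem_erase.mpr ⟨hwv, Equiv.Perm.mem_support.mpr fun hw => ?_⟩, he⟩
  exact Equiv.Perm.mem_support.mp hv (hM.apply_eq_self_of_apply_eq_self hinv he hw)

theorem card_fixed_le_card_support (hP : IsOneFactorisation n P) {g : Equiv.Perm (Fin n)}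
    (hg : IsOneFactorisationAuto n P g) (hg1 : g ≠ 1) {x : Fin n} (hx : g x = x) :
    #{y | g y = y} ≤ #g.support := by
  obtain ⟨v, hv⟩ := nonempty_iff_ne_empty.mpr (Equiv.Perm.support_eq_empty_iff.not.mpr hg1)
  have hle : #(({y | g y = y} : Finset (Fin n)).erase x) ≤ #(g.support.erase v) := by
    refine card_le_card_of_forall_subsingleton (fun y w => {v, w} ∈ parallelClass P x y)
      (fun y hy => ?_) (fun w hw y hy y' hy' => ?_)
    · obtain ⟨hyx, hy⟩ := mem_erase.mp hy
      exact hP.exists_pair_mem_parallelClass_of_mem_support hg (Ne.symm hyx) hx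
        (by simpa using hy) hv
    · obtain ⟨hys, hyw⟩ := hy
      obtain ⟨hy's, hy'w⟩ := hy'
      exact hP.eq_of_pair_mem_parallelClass (mem_erase.mp hys).1.symm (mem_erase.mp hy's).1.symm
        (mem_erase.mp hw).1.symm hyw hy'w
  rw [card_erase_of_mem (by simpa using hx), card_erase_of_mem hv] at hle
  have := card_pos.mpr ⟨v, hv⟩
  omega

end IsOneFactorisation

open Equiv.Perm in
theorem card_oneFactorisations_le_pow_card_quotient_sameCycle {g : Equiv.Perm (Fin n)} {x : Fin n}
    (hx : g x = x) :
    Nat.card {P : Finset (Finset (Finset (Fin n))) //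
        IsOneFactorisation n P ∧ IsOneFactorisationAuto n P g} ≤
      (n ^ (n / 2)) ^ Nat.card (Quotient (SameCycle.setoid g)) := by
  classical
  -- `parallelClass P x x` is the junk value `∅`
  let t : Quotient (SameCycle.setoid g) → Finset (Finset (Finset (Fin n))) := fun q =>
    if q.out = x then {∅} else (univ : Finset (Fin n)).perfectMatchings
  have hmem : ∀ P, IsOneFactorisation n P → ∀ q, parallelClass P x q.out ∈ t q := by
    intro P hP q
    by_cases hq : q.out = x
    · simp [t, hq, hP.parallelClass_self]
    · simpa [t, hq] using (hP.1 _ (hP.parallelClass_mem (Ne.symm hq))).mem_perfectMatchings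
  let Φ : {P // IsOneFactorisation n P ∧ IsOneFactorisationAuto n P g} → Fintype.piFinset t :=
    fun P => ⟨fun q => parallelClass P.1 x q.out, Fintype.mem_piFinset.mpr (hmem P.1 P.2.1)⟩
  have hΦ : Function.Injective Φ := by
    rintro ⟨P, hP, hPg⟩ ⟨P', hP', hP'g⟩ h
    have hclass : parallelClass P x = parallelClass P' x :=
      eq_of_semiconj_of_forall_out_eq (hP.semiconj_parallelClass hPg hx)
        (hP'.semiconj_parallelClass hP'g hx) (congrFun (congrArg Subtype.val h))
    rw [Subtype.mk.injEq, ← hP.image_parallelClass x, ← hP'.image_parallelClass x, hclass]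
  have hcard : ∀ q, #(t q) ≤ n ^ (n / 2) := by
    intro q
    by_cases hq : q.out = x
    · simpa [t, hq] using Nat.one_le_pow _ _ (Fin.pos x)
    · simpa [t, hq] using card_perfectMatchings_le (univ : Finset (Fin n))
  calc Nat.card {P // IsOneFactorisation n P ∧ IsOneFactorisationAuto n P g}
      ≤ Nat.card (Fintype.piFinset t) := Nat.card_le_card_of_injective Φ hΦ
    _ = ∏ q, #(t q) := by rw [Nat.card_eq_fintype_card, Fintype.card_coe, Fintype.card_piFinset]
    _ ≤ (n ^ (n / 2)) ^ Nat.card (Quotient (SameCycle.setoid g)) := by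
      rw [Nat.card_eq_fintype_card, ← card_univ]
      exact prod_le_pow_card _ _ _ fun q _ => hcard q

theorem natCast_pow_half_mul_le_rpow {n q : ℕ} (hn : 1 ≤ n) (hq : 4 * q ≤ 3 * n) :
    ((n ^ (n / 2 * q) : ℕ) : ℝ) ≤ (n : ℝ) ^ (3 * (n : ℝ) ^ 2 / 8) := by
  have hhalf : ((n / 2 : ℕ) : ℝ) ≤ n / 2 := Nat.cast_div_le
  have hq' : (q : ℝ) ≤ 3 * n / 4 := by
    rw [le_div_iff₀ (by norm_num)]
    exact_mod_cast (by omega : q * 4 ≤ 3 * n)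
  have hexp : ((n / 2 * q : ℕ) : ℝ) ≤ 3 * (n : ℝ) ^ 2 / 8 := by
    push_cast
    calc ((n / 2 : ℕ) : ℝ) * q ≤ (n / 2) * (3 * n / 4) :=
          mul_le_mul hhalf hq' (Nat.cast_nonneg _) (by positivity)
      _ = 3 * (n : ℝ) ^ 2 / 8 := by ring
  rw [Nat.cast_pow, ← Real.rpow_natCast]
  exact Real.rpow_le_rpow_of_exponent_le (by exact_mod_cast hn) hexp

end OneFactorisation

theorem count_one_factorisations_fixed_by_perm_with_fixed_point_general (n : ℕ)
    (g : Equiv.Perm (Fin n)) (hg1 : g ≠ 1) (hfix : ∃ x, g x = x) :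
    (Nat.card {P : Finset (Finset (Finset (Fin n))) //
        IsOneFactorisation n P ∧ IsOneFactorisationAuto n P g} : ℝ) ≤
      (n : ℝ) ^ (3 * (n : ℝ) ^ 2 / 8) := by
  obtain ⟨x, hx⟩ := hfix
  rcases isEmpty_or_nonempty {P : Finset (Finset (Finset (Fin n))) //
      IsOneFactorisation n P ∧ IsOneFactorisationAuto n P g} with hempty | ⟨⟨P, hP, hPg⟩⟩
  · rw [Nat.card_of_isEmpty, Nat.cast_zero]
    positivity
  have hfixed := hP.card_fixed_le_card_support hPg hg1 hx
  have hsplit : #{y | g y = y} + #g.support = n := by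
    simpa [Equiv.Perm.support, Finset.card_univ] using
      card_filter_add_card_filter_not (s := univ) (fun y => g y = y)
  have horbits := g.two_mul_card_quotient_sameCycle_le
  rw [Fintype.card_fin] at horbits
  refine (Nat.cast_le.mpr (card_oneFactorisations_le_pow_card_quotient_sameCycle hx)).trans ?_
  rw [← pow_mul]
  exact natCast_pow_half_mul_le_rpow (Fin.pos x) (by omega)

/-- A non-identity permutation `g` of an `n`-element set (`n` even) fixing at
least one point is an automorphism of at most `n ^ (3n²/8)` edge-parallelisms
of the complete graph on that set. -/
theorem count_one_factorisations_fixed_by_perm_with_fixed_point (n : ℕ)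
    (hn : Even n) (g : Equiv.Perm (Fin n)) (hg1 : g ≠ 1) (hfix : ∃ x, g x = x) :
    (Nat.card {P : Finset (Finset (Finset (Fin n))) //
        IsOneFactorisation n P ∧ IsOneFactorisationAuto n P g} : ℝ) ≤
      (n : ℝ) ^ (3 * (n : ℝ) ^ 2 / 8) :=
  count_one_factorisations_fixed_by_perm_with_fixed_point_general n g hg1 hfix
end
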